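/- For a smooth function f : ℝⁿ → ℝ, the set of a = (a₁,…,aₙ) ∈ ℝⁿ such that the function x ↦ f(x) + a₁x₁ + ⋯ + aₙxₙ is a Morse function (all critical points nondegenerate) is residual in ℝⁿ. -/

import Mathlib

open Filter Set Topology

/-- Hessian matrix of second partial derivatives. -/
noncomputable def Hess {n : ℕ} (f : (Fin n → ℝ) → ℝ) (x : Fin n → ℝ) :
    Matrix (Fin n) (Fin n) ℝ :=
  Matrix.of fun i j => fderiv ℝ (fun y => fderiv ℝ f y (Pi.single j 1)) x (Pi.single i 1)

/-- `x` is a critical point of `f`. -/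
def IsCriticalPt {n : ℕ} (f : (Fin n → ℝ) → ℝ) (x : Fin n → ℝ) : Prop :=
  fderiv ℝ f x = 0

/-- `f` is Morse on `U`: every critical point in `U` has invertible Hessian. -/
def MorseOn {n : ℕ} (f : (Fin n → ℝ) → ℝ) (U : Set (Fin n → ℝ)) : Prop :=
  ∀ x ∈ U, IsCriticalPt f x → (Hess f x).det ≠ 0

/-- The quadratic perturbation `q_a(x) = ∑ aᵢ xᵢ²`. -/
def qa {n : ℕ} (a : Fin n → ℝ) (x : Fin n → ℝ) : ℝ := ∑ i, a i * (x i) ^ 2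

/-! ### Auxiliary definitions and lemmas -/

/-- The gradient map of `f`. -/
noncomputable def gradMap {n : ℕ} (f : (Fin n → ℝ) → ℝ) (x : Fin n → ℝ) : Fin n → ℝ :=
  fun i => fderiv ℝ f x (Pi.single i 1)

/-- The linear functional `x ↦ ∑ aᵢ xᵢ` as a continuous linear map. -/
noncomputable def linA {n : ℕ} (a : Fin n → ℝ) : (Fin n → ℝ) →L[ℝ] ℝ :=
  ∑ i, a i • ContinuousLinearMap.proj i

lemma linA_apply {n : ℕ} (a x : Fin n → ℝ) : linA a x = ∑ i, a i * x i := by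
  simp [linA]

lemma linA_single {n : ℕ} (a : Fin n → ℝ) (j : Fin n) : linA a (Pi.single j 1) = a j := by
  rw [linA_apply, Finset.sum_eq_single j]
  · simp
  · intro b _ hb; simp [Pi.single_apply, hb]
  · simp

lemma gradMap_coord_contDiff {n : ℕ} {f : (Fin n → ℝ) → ℝ} (hf : ContDiff ℝ 2 f) (i : Fin n) :
    ContDiff ℝ 1 (fun y => gradMap f y i) :=
  (hf.fderiv_right (by norm_num)).clm_apply contDiff_const

lemma gradMap_contDiff {n : ℕ} {f : (Fin n → ℝ) → ℝ} (hf : ContDiff ℝ 2 f) :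
    ContDiff ℝ 1 (gradMap f) := by
  rw [contDiff_pi]; exact fun i => gradMap_coord_contDiff hf i

lemma fderiv_gradMap_det {n : ℕ} {f : (Fin n → ℝ) → ℝ} (hf : ContDiff ℝ 2 f) (x : Fin n → ℝ) :
    (fderiv ℝ (gradMap f) x).det = (Hess f x).det := by
  have hdiff : ∀ i, DifferentiableAt ℝ (fun y => gradMap f y i) x := fun i =>
    ((gradMap_coord_contDiff hf i).differentiable one_ne_zero) x
  have hM : (LinearMap.toMatrix (Pi.basisFun ℝ (Fin n)) (Pi.basisFun ℝ (Fin n))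
      (fderiv ℝ (gradMap f) x : (Fin n → ℝ) →ₗ[ℝ] (Fin n → ℝ))) = (Hess f x).transpose := by
    ext i j
    rw [LinearMap.toMatrix_apply]
    simp only [Pi.basisFun_apply, Pi.basisFun_repr, ContinuousLinearMap.coe_coe]
    rw [fderiv_pi hdiff]
    simp [gradMap, Hess, Matrix.transpose_apply]
  rw [ContinuousLinearMap.det, ← LinearMap.det_toMatrix (Pi.basisFun ℝ (Fin n)), hM,
    Matrix.det_transpose]

lemma continuous_hess {n : ℕ} {f : (Fin n → ℝ) → ℝ} (hf : ContDiff ℝ 2 f) :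
    Continuous fun x => Hess f x := by
  apply continuous_matrix
  intro i j
  have h1 : ContDiff ℝ 1 (fun y => gradMap f y j) := gradMap_coord_contDiff hf j
  exact ((h1.fderiv_right (m := 0) (by norm_num)).clm_apply contDiff_const).continuous

lemma fderiv_perturbed {n : ℕ} {f : (Fin n → ℝ) → ℝ} (hf : ContDiff ℝ 2 f)
    (a : Fin n → ℝ) (x : Fin n → ℝ) :
    fderiv ℝ (fun y => f y + ∑ i, a i * y i) x = fderiv ℝ f x + linA a := by
  have h1 : HasFDerivAt (fun y => f y + linA a y) (fderiv ℝ f x + linA a) x :=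
    ((hf.differentiable (by norm_num) x).hasFDerivAt).add ((linA a).hasFDerivAt)
  have h2 : HasFDerivAt (fun y => f y + ∑ i, a i * y i) (fderiv ℝ f x + linA a) x := by
    apply h1.congr_of_eventuallyEq
    exact Filter.Eventually.of_forall fun y => by simp [linA_apply]
  exact h2.fderiv

lemma hess_perturbed {n : ℕ} {f : (Fin n → ℝ) → ℝ} (hf : ContDiff ℝ 2 f)
    (a : Fin n → ℝ) (x : Fin n → ℝ) :
    Hess (fun y => f y + ∑ i, a i * y i) x = Hess f x := by
  ext i j
  simp only [Hess, Matrix.of_apply]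
  have h : (fun y => fderiv ℝ (fun z => f z + ∑ i, a i * z i) y (Pi.single j 1)) =
      fun y => fderiv ℝ f y (Pi.single j 1) + linA a (Pi.single j 1) := by
    funext y; rw [fderiv_perturbed hf a y]; rfl
  rw [h, fderiv_add_const]

lemma critical_iff {n : ℕ} {f : (Fin n → ℝ) → ℝ} (hf : ContDiff ℝ 2 f)
    (a : Fin n → ℝ) (x : Fin n → ℝ) :
    IsCriticalPt (fun y => f y + ∑ i, a i * y i) x ↔ gradMap f x = -a := by
  rw [IsCriticalPt, fderiv_perturbed hf a x]
  constructor
  · intro h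
    funext j
    have h2 := congrFun (congrArg (fun L : (Fin n → ℝ) →L[ℝ] ℝ => (L : (Fin n → ℝ) → ℝ))
      h) (Pi.single j 1)
    simp only [ContinuousLinearMap.add_apply, ContinuousLinearMap.zero_apply,
      ContinuousLinearMap.coe_add', Pi.add_apply, ContinuousLinearMap.zero_apply] at h2
    rw [linA_single] at h2
    have : fderiv ℝ f x (Pi.single j 1) = -a j := by linarith
    simpa [gradMap] using this
  · intro h
    apply ContinuousLinearMap.coe_injective
    apply Module.Basis.ext (Pi.basisFun ℝ (Fin n))
    intro j
    have hgj : fderiv ℝ f x (Pi.single j 1) = -a j := congrFun h j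
    simp only [Pi.basisFun_apply, ContinuousLinearMap.coe_coe]
    show (fderiv ℝ f x + linA a) (Pi.single j 1) = (0 : (Fin n → ℝ) →L[ℝ] ℝ) (Pi.single j 1)
    rw [ContinuousLinearMap.add_apply, linA_single, hgj]
    simp

/-- for smooth `f : ℝⁿ → ℝ`, the set of `a` such that
`x ↦ f x + ∑ aᵢ xᵢ` is Morse is residual in `ℝⁿ`. -/
theorem morse_linear_perturbation_residual (n : ℕ) (f : (Fin n → ℝ) → ℝ)
    (hf : ContDiff ℝ (⊤ : ℕ∞) f) :
    {a : Fin n → ℝ | MorseOn (fun x => f x + ∑ i, a i * x i) Set.univ} ∈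
      residual (Fin n → ℝ) := by
  classical
  have hf2 : ContDiff ℝ 2 f := hf.of_le (WithTop.coe_le_coe.mpr le_top)
  set g := gradMap f with hg
  set C : Set (Fin n → ℝ) := {x | (Hess f x).det = 0} with hC
  have hCclosed : IsClosed C :=
    isClosed_eq ((continuous_hess hf2).matrix_det) continuous_const
  set S : ℕ → Set (Fin n → ℝ) := fun k => (fun x => -g x) '' (C ∩ Metric.closedBall 0 k)
    with hS
  have hgc : Continuous g := (gradMap_contDiff hf2).continuous
  have hScompact : ∀ k, IsCompact (S k) := fun k =>
    (((isCompact_closedBall (0 : Fin n → ℝ) k).inter_left hCclosed).image hgc.neg)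
  have hSmeas : ∀ k, MeasureTheory.volume (S k) = 0 := by
    intro k
    have h0 : MeasureTheory.volume (g '' (C ∩ Metric.closedBall 0 k)) = 0 := by
      apply MeasureTheory.addHaar_image_eq_zero_of_det_fderivWithin_eq_zero
        MeasureTheory.volume (f' := fun x => fderiv ℝ g x)
      · intro x _
        exact (((gradMap_contDiff hf2).differentiable one_ne_zero) x).hasFDerivAt.hasFDerivWithinAt
      · intro x hx
        rw [hg, fderiv_gradMap_det hf2 x]
        exact hx.1
    have heq : S k = -(g '' (C ∩ Metric.closedBall 0 k)) := by
      rw [hS, ← Set.image_neg_eq_neg, Set.image_image]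
    rw [heq, MeasureTheory.Measure.measure_neg]
    exact h0
  have hopen : ∀ k, IsOpen (S k)ᶜ := fun k => (hScompact k).isClosed.isOpen_compl
  have hdense : ∀ k, Dense (S k)ᶜ := by
    intro k
    rw [← interior_eq_empty_iff_dense_compl]
    by_contra h
    have hpos := MeasureTheory.Measure.measure_pos_of_nonempty_interior
      (μ := MeasureTheory.volume) (nonempty_iff_ne_empty.mpr h)
    rw [hSmeas k] at hpos
    exact lt_irrefl _ hpos
  have hres : (⋂ k, (S k)ᶜ) ∈ residual (Fin n → ℝ) :=
    countable_iInter_mem.mpr fun k => residual_of_dense_open (hopen k) (hdense k)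
  apply Filter.mem_of_superset hres
  intro a ha
  simp only [Set.mem_iInter, Set.mem_compl_iff] at ha
  intro x _ hcrit
  rw [show (fun x => f x + ∑ i, a i * x i) = (fun y => f y + ∑ i, a i * y i) from rfl] at hcrit
  rw [critical_iff hf2 a x] at hcrit
  rw [hess_perturbed hf2 a x]
  intro hdet
  obtain ⟨k, hk⟩ := exists_nat_ge ‖x‖
  apply ha k
  refine ⟨x, ⟨hdet, ?_⟩, ?_⟩
  · simpa [Metric.mem_closedBall, dist_zero_right] using hk
  · show -g x = a
    rw [hg, hcrit]; simp
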